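/- (Theorem 1) Let m ≥ 1, let 0 < a < τ, let C : ℝ^m → ℝ be continuous, and let w_f ∈ ℝ^m. Suppose C is point-symmetric about w_f on D(w_f, τ), i.e., C(w_f + v) = C(w_f − v) for all v ∈ ℝ^m with ‖v‖_∞ ≤ τ. Then the smoothed function C̄ (the average of C over the box of radius a under the Uniform Perturbation) has a critical point at w_f: every partial derivative of C̄ at w_f exists and equals zero. -/

import Mathlib

open MeasureTheory

noncomputable section

/-- The closed ℓ∞-box `D(w, ς)` of radius `ς` centered at `w`. -/
def box {m : ℕ} (w : Fin m → ℝ) (ς : ℝ) : Set (Fin m → ℝ) :=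
  {w' | ∀ i, |w' i - w i| ≤ ς}

/-- The smoothed function `C̄(w) = (2a)^{-m} ∫_{D(w,a)} C(w') dw'`. -/
def smoothed {m : ℕ} (a : ℝ) (C : (Fin m → ℝ) → ℝ) (w : Fin m → ℝ) : ℝ :=
  ((2 * a) ^ m)⁻¹ * ∫ w' in box w a, C w'

/-!
Slicing the box `D(w, a)` perpendicular to the `i`-th axis, Fubini gives
`C̄(w with w_i := t) = (2a)^{-m} ∫_{t-a}^{t+a} F(s) ds`, where `F(s)` is the integral of `C`
over the slice `x_i = s`. Hence `∂_i C̄(w) = (2a)^{-m} (F(w_i + a) - F(w_i - a))`. The point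
reflection through `w_f` maps the slice at `w_f i + a` onto the slice at `w_f i - a`, preserving
the measure and, by symmetry, the integrand; so the two end slices have the same integral.
-/

open Set

theorem box_eq_Icc {m : ℕ} (w : Fin m → ℝ) (a : ℝ) :
    box w a = Icc (w - Function.const _ a) (w + Function.const _ a) := by
  ext x
  simp only [box, mem_ofPred_eq, mem_Icc, Pi.le_def, Pi.add_apply,
    Function.const_apply, abs_le, ← forall_and, sub_le_iff_le_add, neg_le_sub_iff_le_add]
  grind

theorem isCompact_box {m : ℕ} (w : Fin m → ℝ) (a : ℝ) : IsCompact (box w a) := by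
  rw [box_eq_Icc]; exact isCompact_Icc

theorem measurableSet_box {m : ℕ} (w : Fin m → ℝ) (a : ℝ) : MeasurableSet (box w a) := by
  rw [box_eq_Icc]; exact measurableSet_Icc

theorem setIntegral_box_comp_two_smul_sub {m : ℕ} (f : (Fin m → ℝ) → ℝ) (c : Fin m → ℝ)
    (a : ℝ) : ∫ y in box c a, f ((2 : ℝ) • c - y) = ∫ y in box c a, f y := by
  have hpre : (fun y => (2 : ℝ) • c - y) ⁻¹' box c a = box c a := by
    ext y
    simp only [box, mem_preimage, mem_ofPred_eq, Pi.sub_apply, Pi.smul_apply, smul_eq_mul]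
    refine forall_congr' fun j => ?_
    rw [← abs_neg]; ring_nf
  have := (volume.measurePreserving_sub_left ((2 : ℝ) • c)).setIntegral_preimage_emb
    (Homeomorph.subLeft ((2 : ℝ) • c)).measurableEmbedding f (box c a)
  rwa [hpre] at this

theorem hasDerivAt_intervalIntegral_sub_add {F : ℝ → ℝ} (hF : Continuous F) (a t : ℝ) :
    HasDerivAt (fun t => ∫ s in (t - a)..(t + a), F s) (F (t + a) - F (t - a)) t := by
  have hprim (c : ℝ) : HasDerivAt (fun u => ∫ s in 0..u, F s) (F c) c :=
    (hF.integral_hasStrictDerivAt 0 c).hasDerivAt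
  have := ((hprim (t + a)).comp t ((hasDerivAt_id t).add_const a)).sub
    ((hprim (t - a)).comp t ((hasDerivAt_id t).sub_const a))
  simp only [Function.comp_def, id, mul_one] at this
  refine this.congr_of_eventuallyEq (Filter.Eventually.of_forall fun u => ?_)
  exact (intervalIntegral.integral_interval_sub_left (hF.intervalIntegrable _ _)
    (hF.intervalIntegrable _ _)).symm

section Slice

variable {n : ℕ}

theorem insertNth_preimage_box (i : Fin (n + 1)) (w : Fin (n + 1) → ℝ) (a : ℝ) :
    (fun p : ℝ × (Fin n → ℝ) => i.insertNth p.1 p.2) ⁻¹' box w a =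
      Icc (w i - a) (w i + a) ×ˢ box (i.removeNth w) a := by
  ext ⟨s, y⟩
  simp [box, i.forall_iff_succAbove, abs_le, Fin.removeNth, and_comm, add_comm]

def sliceIntegral (C : (Fin (n + 1) → ℝ) → ℝ) (i : Fin (n + 1)) (w : Fin (n + 1) → ℝ)
    (a s : ℝ) : ℝ :=
  ∫ y in box (i.removeNth w) a, C (i.insertNth s y)

theorem setIntegral_box_eq_setIntegral_sliceIntegral {C : (Fin (n + 1) → ℝ) → ℝ}
    {w : Fin (n + 1) → ℝ} {a : ℝ} (hC : IntegrableOn C (box w a)) (i : Fin (n + 1)) :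
    ∫ x in box w a, C x = ∫ s in Icc (w i - a) (w i + a), sliceIntegral C i w a s := by
  set e := (MeasurableEquiv.piFinSuccAbove (fun _ => ℝ) i).symm
  have he : MeasurePreserving e := (volume_preserving_piFinSuccAbove (fun _ => ℝ) i).symm _
  have hpre : e ⁻¹' box w a = Icc (w i - a) (w i + a) ×ˢ box (i.removeNth w) a :=
    insertNth_preimage_box i w a
  rw [← he.map_eq, setIntegral_map_equiv, hpre, Measure.volume_eq_prod, setIntegral_prod]
  · rfl
  · rw [← hpre, ← Measure.volume_eq_prod]
    exact (he.integrableOn_comp_preimage e.measurableEmbedding).2 hC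

theorem continuous_sliceIntegral {C : (Fin (n + 1) → ℝ) → ℝ} (hC : Continuous C)
    (i : Fin (n + 1)) (w : Fin (n + 1) → ℝ) (a : ℝ) : Continuous (sliceIntegral C i w a) :=
  continuous_parametric_integral_of_continuous (f := fun s y => C (i.insertNth s y))
    (hC.comp (continuous_fst.finInsertNth (A := fun _ => ℝ) i continuous_snd))
    (isCompact_box _ _)

theorem hasDerivAt_smoothed_update {C : (Fin (n + 1) → ℝ) → ℝ} (hC : Continuous C) {a : ℝ}
    (ha : 0 ≤ a) (i : Fin (n + 1)) (w : Fin (n + 1) → ℝ) :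
    HasDerivAt (fun t => smoothed a C (Function.update w i t))
      (((2 * a) ^ (n + 1))⁻¹ *
        (sliceIntegral C i w a (w i + a) - sliceIntegral C i w a (w i - a))) (w i) := by
  have hslice (t : ℝ) : ∫ x in box (Function.update w i t) a, C x =
      ∫ s in (t - a)..(t + a), sliceIntegral C i w a s := by
    rw [setIntegral_box_eq_setIntegral_sliceIntegral
        (hC.continuousOn.integrableOn_compact (isCompact_box _ _)) i,
      integral_Icc_eq_integral_Ioc, ← intervalIntegral.integral_of_le (by linarith)]
    simp only [sliceIntegral, Fin.removeNth_update, Function.update_self]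
  simp only [smoothed, hslice]
  exact (hasDerivAt_intervalIntegral_sub_add (continuous_sliceIntegral hC i w a) a (w i)).const_mul
    _

theorem sliceIntegral_add_eq_sub_of_symm {C : (Fin (n + 1) → ℝ) → ℝ} {w : Fin (n + 1) → ℝ}
    {a τ : ℝ} (hsym : ∀ v : Fin (n + 1) → ℝ, (∀ i, |v i| ≤ τ) → C (w + v) = C (w - v))
    (haτ : |a| ≤ τ) (i : Fin (n + 1)) :
    sliceIntegral C i w a (w i + a) = sliceIntegral C i w a (w i - a) := by
  set c := i.removeNth w
  have hreflect (y) (hy : y ∈ box c a) :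
      C (i.insertNth (w i + a) y) = C (i.insertNth (w i - a) ((2 : ℝ) • c - y)) := by
    have hv : ∀ k, |Fin.insertNth (α := fun _ => ℝ) i a (y - c) k| ≤ τ := by
      refine i.forall_iff_succAbove.2 ⟨by simpa using haτ, fun j => ?_⟩
      simpa using (hy j).trans ((le_abs_self a).trans haτ)
    convert hsym _ hv using 2 <;> ext k <;> induction k using i.succAboveCases <;>
      simp only [Fin.insertNth_apply_same, Fin.insertNth_apply_succAbove, Pi.add_apply,
        Pi.sub_apply, Pi.smul_apply, Fin.removeNth, smul_eq_mul, c] <;> ring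
  unfold sliceIntegral
  rw [setIntegral_congr_fun (measurableSet_box _ _) hreflect]
  exact setIntegral_box_comp_two_smul_sub (fun y => C (i.insertNth (w i - a) y)) c a

end Slice

theorem smoothed_critical_point_of_symmetry_general
    {m : ℕ} (a τ : ℝ) (ha : 0 < a) (haτ : a < τ)
    (C : (Fin m → ℝ) → ℝ) (hC : Continuous C)
    (w_f : Fin m → ℝ)
    (hsym : ∀ v : Fin m → ℝ, (∀ i, |v i| ≤ τ) → C (w_f + v) = C (w_f - v)) :
    ∀ i : Fin m,
      HasDerivAt (fun t : ℝ => smoothed a C (Function.update w_f i t)) 0 (w_f i) := by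
  intro i
  cases m with
  | zero => exact i.elim0
  | succ n =>
    have hderiv := hasDerivAt_smoothed_update hC ha.le i w_f
    rwa [sliceIntegral_add_eq_sub_of_symm hsym ((abs_of_pos ha).trans_lt haτ).le, sub_self,
      mul_zero] at hderiv

theorem smoothed_critical_point_of_symmetry
    {m : ℕ} (hm : 1 ≤ m) (a τ : ℝ) (ha : 0 < a) (haτ : a < τ)
    (C : (Fin m → ℝ) → ℝ) (hC : Continuous C)
    (w_f : Fin m → ℝ)
    (hsym : ∀ v : Fin m → ℝ, (∀ i, |v i| ≤ τ) → C (w_f + v) = C (w_f - v)) :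
    ∀ i : Fin m,
      HasDerivAt (fun t : ℝ => smoothed a C (Function.update w_f i t)) 0 (w_f i) :=
  smoothed_critical_point_of_symmetry_general a τ ha haτ C hC w_f hsym
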